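/- arXiv:1801.08070 — 5 statements merged into one kernel-verified Lean document; each statement's English description precedes it below -/
import Mathlib

section
/- Let D = (0,1) × (1,∞) × (0,1) ⊂ ℝ³ and define T(U,V,W) = (U',V',W') by U' = (W·V + (1−W)·U)/V, V' = (W·V + (1−W)·U)/U, and W' = U·(V−1)/(V−U). Then T maps D into D, and T is an involution on D: T(T(U,V,W)) = (U,V,W) for every (U,V,W) ∈ D. -/
/-- The involution `T` of Lemma `ind-sol`: `(U,V,W) ↦ (U',V',W')` with
`U' = (W·V + (1−W)·U)/V`, `V' = (W·V + (1−W)·U)/U`, `W' = U·(V−1)/(V−U)`. -/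
noncomputable def betaInvolution (p : ℝ × ℝ × ℝ) : ℝ × ℝ × ℝ :=
  ((p.2.2 * p.2.1 + (1 - p.2.2) * p.1) / p.2.1,
   ((p.2.2 * p.2.1 + (1 - p.2.2) * p.1) / p.1,
    p.1 * (p.2.1 - 1) / (p.2.1 - p.1)))

/-- The domain `D = (0,1) × (1,∞) × (0,1)`. -/
def betaInvolutionDomain : Set (ℝ × ℝ × ℝ) :=
  {p | p.1 ∈ Set.Ioo (0 : ℝ) 1 ∧ p.2.1 ∈ Set.Ioi (1 : ℝ) ∧ p.2.2 ∈ Set.Ioo (0 : ℝ) 1}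

/-- `T` maps `D` into `D` and is an involution on `D`. -/
theorem betaInvolution_mapsTo_and_involutive :
    Set.MapsTo betaInvolution betaInvolutionDomain betaInvolutionDomain ∧
      ∀ p ∈ betaInvolutionDomain, betaInvolution (betaInvolution p) = p := by
  constructor
  · rintro ⟨U, V, W⟩ ⟨⟨hU0, hU1⟩, hV, hW0, hW1⟩
    simp only [Set.mem_Ioi] at hV
    simp only at hU0 hU1 hW0 hW1
    have hUV : U < V := hU1.trans hV
    have hS0 : 0 < W * V + (1 - W) * U := by nlinarith
    simp only [betaInvolution, betaInvolutionDomain, Set.mem_setOf_eq, Set.mem_Ioo, Set.mem_Ioi]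
    have hSV : W * V + (1 - W) * U < V := by nlinarith
    have hSU : U < W * V + (1 - W) * U := by nlinarith
    refine ⟨⟨?_, ?_⟩, ?_, ?_, ?_⟩
    · exact div_pos hS0 (by linarith)
    · exact (div_lt_one (by linarith)).2 hSV
    · exact (Set.mem_Ioi).2 ((one_lt_div hU0).2 hSU)
    · exact div_pos (by nlinarith) (by linarith)
    · rw [div_lt_one (by linarith)]; nlinarith
  · rintro ⟨U, V, W⟩ ⟨⟨hU0, hU1⟩, hV, hW0, hW1⟩
    simp only [Set.mem_Ioi] at hV
    simp only at hU0 hU1 hW0 hW1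
    have hUV : U < V := hU1.trans hV
    have hS0 : 0 < W * V + (1 - W) * U := by nlinarith
    have hUne : U ≠ 0 := ne_of_gt hU0
    have hVne : V ≠ 0 := ne_of_gt (by linarith : (0:ℝ) < V)
    have hVU : V - U ≠ 0 := ne_of_gt (by linarith)
    have hSne : W * V + (1 - W) * U ≠ 0 := ne_of_gt hS0
    simp only [betaInvolution, Prod.mk.injEq]
    refine ⟨?_, ?_, ?_⟩
    · field_simp
      ring
    · field_simp
      ring
    · rw [div_eq_iff]
      · field_simp
        ring
      · rw [div_sub_div _ _ hUne hVne, div_ne_zero_iff]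
        constructor
        · intro h
          have : (W * V + (1 - W) * U) * (V - U) = 0 := by ring_nf; ring_nf at h; linarith
          exact (mul_ne_zero hSne hVU) this
        · exact mul_ne_zero hUne hVne
end

section
/- Let α, β, λ > 0 and let U, V, W be independent real-valued random variables with U ~ Beta(α+λ, β), 1/V ~ Beta(λ, α), and W ~ Beta(α, β). Set W' = U·(V−1)/(V−U). Then the law of the random variable W'/U is absolutely continuous with respect to Lebesgue measure on ℝ, with density g(x) = [x^{α−1}(1−x)^{λ−1} / (B(λ,α)·B(α+λ,β))] · ∫₀¹ (1−xu)^{−(α+λ)} u^{α+λ−1} (1−u)^{α+β−1} du for 0 < x < 1, and g(x) = 0 for x outside (0,1). -/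
open MeasureTheory ProbabilityTheory

/-- The Beta(a,b) probability measure on ℝ: supported on (0,1) with density
`x ↦ x^(a-1) * (1-x)^(b-1) * Γ(a+b) / (Γ(a) * Γ(b))`. -/
noncomputable def betaMeasure (a b : ℝ) : Measure ℝ :=
  volume.withDensity fun x =>
    ENNReal.ofReal ((Set.Ioo (0 : ℝ) 1).indicator
      (fun x => x ^ (a - 1) * (1 - x) ^ (b - 1) * Real.Gamma (a + b) /
        (Real.Gamma a * Real.Gamma b)) x)

/-- The beta function `B(a,b) = Γ(a)Γ(b)/Γ(a+b)`. -/
noncomputable def betaFn (a b : ℝ) : ℝ := Real.Gamma a * Real.Gamma b / Real.Gamma (a + b)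

/-!
With `X = V⁻¹ ~ Beta(λ, α)` independent of `U`, one has `W'/U = (1 - X) / (1 - U X)` on
`(0,1)²`. For fixed `u ∈ (0,1)` the Möbius map `x ↦ (1 - x) / (1 - u x)` is an involution of
`(0,1)` with `|derivative| = (1 - u) / (1 - u x)²`, so given `U = u` the ratio has an explicit
density; integrating it against the law of `U` (Tonelli) and multiplying out the two beta
densities gives `g`.
-/

open Set Real
open scoped ENNReal

namespace MeasureTheory.Measure

theorem map_prod_eq_withDensity_lintegral {α β γ : Type*} [MeasurableSpace α]
    [MeasurableSpace β] [MeasurableSpace γ] {μ : Measure α} {ν : Measure β} {ρ : Measure γ}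
    [SFinite μ] [SFinite ν] [SFinite ρ] {φ : α × β → γ} (hφ : Measurable φ)
    {k : α → γ → ℝ≥0∞} (hk : Measurable (Function.uncurry k))
    (hsection : ∀ᵐ a ∂μ, ν.map (fun b => φ (a, b)) = ρ.withDensity (k a)) :
    (μ.prod ν).map φ = ρ.withDensity fun c => ∫⁻ a, k a c ∂μ := by
  ext s hs
  rw [map_apply hφ hs, prod_apply (hφ hs), withDensity_apply _ hs]
  calc ∫⁻ a, ν (Prod.mk a ⁻¹' (φ ⁻¹' s)) ∂μ
      = ∫⁻ a, ∫⁻ c in s, k a c ∂ρ ∂μ := by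
        refine lintegral_congr_ae (hsection.mono fun a ha => ?_)
        have hφa : Measurable fun b => φ (a, b) := hφ.comp measurable_prodMk_left
        dsimp only
        rw [← withDensity_apply _ hs, ← ha, map_apply hφa hs]
        rfl
    _ = ∫⁻ c in s, ∫⁻ a, k a c ∂μ ∂ρ := lintegral_lintegral_swap hk.aemeasurable

end MeasureTheory.Measure

theorem map_restrict_withDensity_of_involutive {s : Set ℝ} (hs : MeasurableSet s)
    {f f' : ℝ → ℝ} (hf : Measurable f) (hf' : ∀ x ∈ s, HasDerivWithinAt f (f' x) s x)
    (hmaps : MapsTo f s s) (hinv : ∀ x ∈ s, f (f x) = x) (g : ℝ → ℝ≥0∞) :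
    ((volume.restrict s).withDensity g).map f
      = (volume.restrict s).withDensity fun x => ENNReal.ofReal |f' x| * g (f x) := by
  ext A hA
  have himage : f '' (A ∩ s) = f ⁻¹' A ∩ s := by
    ext y
    constructor
    · rintro ⟨x, ⟨hxA, hxs⟩, rfl⟩
      exact ⟨by rwa [mem_preimage, hinv x hxs], hmaps hxs⟩
    · rintro ⟨hyA, hys⟩
      exact ⟨f y, ⟨hyA, hmaps hys⟩, hinv y hys⟩
  have hinj : InjOn f (A ∩ s) := fun x hx y hy hxy => by
    rw [← hinv x hx.2, hxy, hinv y hy.2]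
  rw [Measure.map_apply hf hA, withDensity_apply _ (hf hA), withDensity_apply _ hA,
    Measure.restrict_restrict (hf hA), Measure.restrict_restrict hA, ← himage,
    lintegral_image_eq_lintegral_abs_deriv_mul (hA.inter hs)
      (fun x hx => (hf' x hx.2).mono inter_subset_right) hinj g]


noncomputable def moebius (u x : ℝ) : ℝ := (1 - x) / (1 - u * x)

section Moebius

variable {u : ℝ}

theorem measurable_uncurry_moebius : Measurable (Function.uncurry moebius) := by
  unfold Function.uncurry moebius
  fun_prop

theorem one_sub_mul_pos (hu : u ∈ Ioo (0 : ℝ) 1) {x : ℝ} (hx : x ∈ Ioo (0 : ℝ) 1) :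
    0 < 1 - u * x := by
  nlinarith [hu.1, hu.2, hx.1, hx.2]

theorem one_sub_moebius (hu : u ∈ Ioo (0 : ℝ) 1) {x : ℝ} (hx : x ∈ Ioo (0 : ℝ) 1) :
    1 - moebius u x = x * (1 - u) / (1 - u * x) := by
  have hD := (one_sub_mul_pos hu hx).ne'
  rw [moebius, eq_div_iff hD, sub_mul, div_mul_cancel₀ _ hD]
  ring

theorem one_sub_mul_moebius (hu : u ∈ Ioo (0 : ℝ) 1) {x : ℝ} (hx : x ∈ Ioo (0 : ℝ) 1) :
    1 - u * moebius u x = (1 - u) / (1 - u * x) := by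
  have hD := (one_sub_mul_pos hu hx).ne'
  rw [moebius, eq_div_iff hD, sub_mul, mul_assoc, div_mul_cancel₀ _ hD]
  ring

theorem moebius_mem_Ioo (hu : u ∈ Ioo (0 : ℝ) 1) : MapsTo (moebius u) (Ioo 0 1) (Ioo 0 1) := by
  intro x hx
  have hpos := one_sub_mul_pos hu hx
  refine ⟨div_pos (by linarith [hx.2]) hpos, ?_⟩
  rw [moebius, div_lt_one hpos]
  nlinarith [hu.2, hx.1]

theorem moebius_moebius (hu : u ∈ Ioo (0 : ℝ) 1) {x : ℝ} (hx : x ∈ Ioo (0 : ℝ) 1) :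
    moebius u (moebius u x) = x := by
  have h1u : 1 - u ≠ 0 := by linarith [hu.2]
  rw [moebius, one_sub_moebius hu hx, one_sub_mul_moebius hu hx,
    div_div_div_cancel_right₀ (one_sub_mul_pos hu hx).ne', mul_div_cancel_right₀ _ h1u]

theorem hasDerivAt_moebius {x : ℝ} (hx : 1 - u * x ≠ 0) :
    HasDerivAt (moebius u) ((u - 1) / (1 - u * x) ^ 2) x := by
  have h := ((hasDerivAt_id' x).const_sub 1).div (((hasDerivAt_id' x).const_mul u).const_sub 1) hx
  exact h.congr_deriv (by ring)

theorem map_moebius_restrict_withDensity (hu : u ∈ Ioo (0 : ℝ) 1) (g : ℝ → ℝ≥0∞) :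
    ((volume.restrict (Ioo 0 1)).withDensity g).map (moebius u)
      = (volume.restrict (Ioo 0 1)).withDensity
          fun x => ENNReal.ofReal ((1 - u) / (1 - u * x) ^ 2) * g (moebius u x) := by
  have habs (x : ℝ) : |(u - 1) / (1 - u * x) ^ 2| = (1 - u) / (1 - u * x) ^ 2 := by
    rw [abs_div, abs_sub_comm, abs_of_pos (by linarith [hu.2]), abs_of_nonneg (sq_nonneg _)]
  simp_rw [← habs]
  exact map_restrict_withDensity_of_involutive measurableSet_Ioo
    (measurable_uncurry_moebius.comp measurable_prodMk_left)
    (fun x hx => (hasDerivAt_moebius (one_sub_mul_pos hu hx).ne').hasDerivWithinAt)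
    (moebius_mem_Ioo hu) (fun x hx => moebius_moebius hu hx) g

end Moebius

noncomputable def betaDensity (a b x : ℝ) : ℝ :=
  x ^ (a - 1) * (1 - x) ^ (b - 1) * Gamma (a + b) / (Gamma a * Gamma b)

theorem measurable_betaDensity (a b : ℝ) : Measurable (betaDensity a b) := by
  unfold betaDensity
  fun_prop

theorem betaDensity_nonneg {a b x : ℝ} (ha : 0 < a) (hb : 0 < b) (hx : x ∈ Ioo (0 : ℝ) 1) :
    0 ≤ betaDensity a b x := by
  have h1x : 0 ≤ 1 - x := by linarith [hx.2]
  have := Gamma_pos_of_pos ha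
  have := Gamma_pos_of_pos hb
  have := Gamma_pos_of_pos (add_pos ha hb)
  unfold betaDensity
  have := rpow_nonneg hx.1.le (a - 1)
  have := rpow_nonneg h1x (b - 1)
  positivity

theorem betaMeasure_eq_withDensity (a b : ℝ) :
    _root_.betaMeasure a b
      = (volume.restrict (Ioo 0 1)).withDensity fun x => ENNReal.ofReal (betaDensity a b x) := by
  rw [← withDensity_indicator measurableSet_Ioo, _root_.betaMeasure]
  exact congrArg _ (indicator_comp_of_zero ENNReal.ofReal_zero).symm

instance (a b : ℝ) : SFinite (_root_.betaMeasure a b) := by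
  rw [betaMeasure_eq_withDensity]
  infer_instance

theorem ae_mem_Ioo_betaMeasure (a b : ℝ) :
    ∀ᵐ x ∂(_root_.betaMeasure a b), x ∈ Ioo (0 : ℝ) 1 := by
  rw [betaMeasure_eq_withDensity]
  exact (withDensity_absolutelyContinuous _ _).ae_le (ae_restrict_mem measurableSet_Ioo)

theorem integrableOn_rpow_mul_one_sub_rpow {a b : ℝ} (ha : 0 < a) (hb : 0 < b) :
    IntegrableOn (fun x : ℝ => x ^ (a - 1) * (1 - x) ^ (b - 1)) (Ioo 0 1) := by
  have hC : IntegrableOn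
      (fun x : ℝ => (x : ℂ) ^ ((a : ℂ) - 1) * (1 - (x : ℂ)) ^ ((b : ℂ) - 1)) (Ioc 0 1) :=
    (intervalIntegrable_iff_integrableOn_Ioc_of_le zero_le_one).mp
      (Complex.betaIntegral_convergent (by simpa using ha) (by simpa using hb))
  refine IntegrableOn.congr_fun (hC.mono_set Ioo_subset_Ioc_self).norm (fun x hx => ?_)
    measurableSet_Ioo
  have h1x : (1 : ℂ) - x = ((1 - x : ℝ) : ℂ) := by push_cast; ring
  rw [norm_mul, Complex.norm_cpow_eq_rpow_re_of_pos hx.1, h1x,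
    Complex.norm_cpow_eq_rpow_re_of_pos (by linarith [hx.2])]
  simp

/-- The density on `(0,1)` of `moebius u X` for `X ~ Beta(a,b)`. -/
noncomputable def moebiusBetaDensity (a b u x : ℝ) : ℝ :=
  (1 - u) / (1 - u * x) ^ 2 * betaDensity a b (moebius u x)

theorem measurable_moebiusBetaDensity (a b : ℝ) :
    Measurable (Function.uncurry (moebiusBetaDensity a b)) := by
  unfold Function.uncurry moebiusBetaDensity moebius betaDensity
  fun_prop

theorem map_moebius_betaMeasure {u : ℝ} (hu : u ∈ Ioo (0 : ℝ) 1) (a b : ℝ) :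
    (_root_.betaMeasure a b).map (moebius u)
      = volume.withDensity
          ((Ioo 0 1).indicator fun x => ENNReal.ofReal (moebiusBetaDensity a b u x)) := by
  rw [betaMeasure_eq_withDensity, map_moebius_restrict_withDensity hu,
    withDensity_indicator measurableSet_Ioo]
  refine congrArg _ (funext fun x => ?_)
  rw [moebiusBetaDensity, ENNReal.ofReal_mul (div_nonneg (by linarith [hu.2]) (sq_nonneg _))]

noncomputable def ratioIntegrand (α β lam x u : ℝ) : ℝ :=
  (1 - x * u) ^ (-(α + lam)) * u ^ (α + lam - 1) * (1 - u) ^ (α + β - 1)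

noncomputable def ratioDensity (α β lam x : ℝ) : ℝ :=
  x ^ (α - 1) * (1 - x) ^ (lam - 1) / (betaFn lam α * betaFn (α + lam) β) *
    ∫ u in (0 : ℝ)..1, ratioIntegrand α β lam x u

section RatioDensity

variable {α β lam : ℝ}

theorem integrableOn_ratioIntegrand (hα : 0 < α) (hβ : 0 < β) (hlam : 0 < lam)
    {x : ℝ} (hx : x ∈ Ioo (0 : ℝ) 1) :
    IntegrableOn (ratioIntegrand α β lam x) (Ioo 0 1) := by
  have hbeta := (integrableOn_rpow_mul_one_sub_rpow (a := α + lam) (b := α + β)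
    (by linarith) (by linarith)).const_mul ((1 - x) ^ (-(α + lam)))
  refine hbeta.mono' (Measurable.aestronglyMeasurable (by unfold ratioIntegrand; fun_prop))
    ((ae_restrict_iff' measurableSet_Ioo).mpr (Filter.Eventually.of_forall fun u hu => ?_))
  have hxu : 0 < 1 - x * u := by nlinarith [hx.2, hu.1, hu.2]
  have hle : (1 - x * u) ^ (-(α + lam)) ≤ (1 - x) ^ (-(α + lam)) :=
    rpow_le_rpow_of_nonpos (by linarith [hx.2]) (by nlinarith [hx.1, hu.2]) (by linarith)
  rw [ratioIntegrand, mul_assoc, norm_mul, norm_of_nonneg (rpow_nonneg hxu.le _),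
    norm_of_nonneg (mul_nonneg (rpow_nonneg hu.1.le _) (rpow_nonneg (by linarith [hu.2]) _))]
  exact mul_le_mul_of_nonneg_right hle
    (mul_nonneg (rpow_nonneg hu.1.le _) (rpow_nonneg (by linarith [hu.2]) _))

theorem betaDensity_mul_moebiusBetaDensity (hα : 0 < α) (hβ : 0 < β) (hlam : 0 < lam)
    {u x : ℝ} (hu : u ∈ Ioo (0 : ℝ) 1) (hx : x ∈ Ioo (0 : ℝ) 1) :
    betaDensity (α + lam) β u * moebiusBetaDensity lam α u x
      = x ^ (α - 1) * (1 - x) ^ (lam - 1) / (betaFn lam α * betaFn (α + lam) β) *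
          ratioIntegrand α β lam x u := by
  have hD := one_sub_mul_pos hu hx
  have h1u : 0 < 1 - u := by linarith [hu.2]
  have h1x : 0 < 1 - x := by linarith [hx.2]
  rw [moebiusBetaDensity, betaDensity, betaDensity, one_sub_moebius hu hx, moebius,
    ratioIntegrand, mul_comm x u, div_rpow h1x.le hD.le, div_rpow (mul_pos hx.1 h1u).le hD.le,
    mul_rpow hx.1.le h1u.le,
    show α + β - 1 = (β - 1) + ((α - 1) + 1) by ring, rpow_add h1u, rpow_add h1u, rpow_one,
    show -(α + lam) = -((lam - 1) + ((α - 1) + 2)) by ring, rpow_neg hD.le, rpow_add hD,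
    rpow_add hD, show (2 : ℝ) = ((2 : ℕ) : ℝ) by norm_num, rpow_natCast]
  have := (Gamma_pos_of_pos (add_pos hα hlam)).ne'
  have := (Gamma_pos_of_pos (add_pos hlam hα)).ne'
  have := (Gamma_pos_of_pos (add_pos (add_pos hα hlam) hβ)).ne'
  have := (Gamma_pos_of_pos hα).ne'
  have := (Gamma_pos_of_pos hβ).ne'
  have := (Gamma_pos_of_pos hlam).ne'
  have := (rpow_pos_of_pos hD (lam - 1)).ne'
  have := (rpow_pos_of_pos hD (α - 1)).ne'
  have := hD.ne'
  rw [betaFn, betaFn]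
  field_simp

theorem lintegral_moebiusBetaDensity_betaMeasure (hα : 0 < α) (hβ : 0 < β) (hlam : 0 < lam)
    (x : ℝ) :
    ∫⁻ u, (Ioo 0 1).indicator (fun y => ENNReal.ofReal (moebiusBetaDensity lam α u y)) x
        ∂(_root_.betaMeasure (α + lam) β)
      = ENNReal.ofReal ((Ioo 0 1).indicator (ratioDensity α β lam) x) := by
  by_cases hx : x ∈ Ioo (0 : ℝ) 1
  swap
  · simp [indicator_of_notMem hx]
  have hprod : ∀ u ∈ Ioo (0 : ℝ) 1,
      ENNReal.ofReal (betaDensity (α + lam) β u) * ENNReal.ofReal (moebiusBetaDensity lam α u x)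
        = ENNReal.ofReal (betaDensity (α + lam) β u * moebiusBetaDensity lam α u x) :=
    fun u hu => (ENNReal.ofReal_mul (betaDensity_nonneg (add_pos hα hlam) hβ hu)).symm
  have hnonneg : ∀ u ∈ Ioo (0 : ℝ) 1,
      0 ≤ betaDensity (α + lam) β u * moebiusBetaDensity lam α u x := fun u hu =>
    mul_nonneg (betaDensity_nonneg (add_pos hα hlam) hβ hu)
      (mul_nonneg (div_nonneg (by linarith [hu.2]) (sq_nonneg _))
        (betaDensity_nonneg hlam hα (moebius_mem_Ioo hu hx)))
  have hint : IntegrableOn (fun u => betaDensity (α + lam) β u * moebiusBetaDensity lam α u x)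
      (Ioo 0 1) :=
    IntegrableOn.congr_fun ((integrableOn_ratioIntegrand hα hβ hlam hx).const_mul _)
      (fun u hu => (betaDensity_mul_moebiusBetaDensity hα hβ hlam hu hx).symm) measurableSet_Ioo
  simp only [indicator_of_mem hx]
  rw [betaMeasure_eq_withDensity, lintegral_withDensity_eq_lintegral_mul _
      (measurable_betaDensity _ _).ennreal_ofReal
      (measurable_moebiusBetaDensity lam α).of_uncurry_right.ennreal_ofReal]
  simp only [Pi.mul_apply]
  rw [setLIntegral_congr_fun measurableSet_Ioo hprod,
    ← ofReal_integral_eq_lintegral_ofReal hint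
      ((ae_restrict_iff' measurableSet_Ioo).mpr (Filter.Eventually.of_forall hnonneg)),
    setIntegral_congr_fun measurableSet_Ioo
      (fun u hu => betaDensity_mul_moebiusBetaDensity hα hβ hlam hu hx),
    integral_const_mul, ratioDensity, intervalIntegral.integral_of_le zero_le_one,
    integral_Ioc_eq_integral_Ioo]

theorem map_moebius_prod_betaMeasure (hα : 0 < α) (hβ : 0 < β) (hlam : 0 < lam) :
    ((_root_.betaMeasure (α + lam) β).prod (_root_.betaMeasure lam α)).map
        (Function.uncurry moebius)
      = volume.withDensity
          fun x => ENNReal.ofReal ((Ioo 0 1).indicator (ratioDensity α β lam) x) := by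
  have hkernel : Measurable (Function.uncurry fun u =>
      (Ioo 0 1).indicator fun x => ENNReal.ofReal (moebiusBetaDensity lam α u x)) :=
    (measurable_moebiusBetaDensity lam α).ennreal_ofReal.indicator
      (measurableSet_Ioo.preimage measurable_snd)
  rw [Measure.map_prod_eq_withDensity_lintegral measurable_uncurry_moebius hkernel
    ((ae_mem_Ioo_betaMeasure _ _).mono fun u hu => map_moebius_betaMeasure hu lam α)]
  exact congrArg _ (funext (lintegral_moebiusBetaDensity_betaMeasure hα hβ hlam))

end RatioDensity

theorem div_eq_moebius {u x : ℝ} (hu : u ≠ 0) (hx : x ≠ 0) :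
    u * (x⁻¹ - 1) / (x⁻¹ - u) / u = moebius u x := by
  rw [moebius, mul_div_assoc, mul_div_cancel_left₀ _ hu,
    show x⁻¹ - 1 = (1 - x) / x by field_simp, show x⁻¹ - u = (1 - u * x) / x by field_simp,
    div_div_div_cancel_right₀ hx]

theorem density_of_doob_transition_a_general
    {Ω : Type*} [MeasurableSpace Ω] (μ : Measure Ω) [IsProbabilityMeasure μ]
    (α β lam : ℝ) (hα : 0 < α) (hβ : 0 < β) (hlam : 0 < lam)
    (U V W : Ω → ℝ) (hU : Measurable U) (hV : Measurable V)
    (hindep : iIndepFun ![U, V, W] μ)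
    (hUlaw : μ.map U = _root_.betaMeasure (α + lam) β)
    (hVlaw : μ.map (fun ω => (V ω)⁻¹) = _root_.betaMeasure lam α) :
    μ.map (fun ω => (U ω * (V ω - 1) / (V ω - U ω)) / U ω)
      = volume.withDensity fun x =>
          ENNReal.ofReal ((Set.Ioo (0 : ℝ) 1).indicator
            (fun x => x ^ (α - 1) * (1 - x) ^ (lam - 1) / (betaFn lam α * betaFn (α + lam) β) *
              ∫ u in (0 : ℝ)..1,
                (1 - x * u) ^ (-(α + lam)) * u ^ (α + lam - 1) * (1 - u) ^ (α + β - 1)) x) := by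
  have hX : Measurable fun ω => (V ω)⁻¹ := hV.inv
  have hUX : IndepFun U (fun ω => (V ω)⁻¹) μ := by
    simpa [Function.comp_def] using
      (hindep.indepFun (show (0 : Fin 3) ≠ 1 by decide)).comp measurable_id measurable_inv
  have hlaw : μ.map (fun ω => (U ω, (V ω)⁻¹))
      = (_root_.betaMeasure (α + lam) β).prod (_root_.betaMeasure lam α) := by
    rw [← hUlaw, ← hVlaw]
    exact (indepFun_iff_map_prod_eq_prod_map_map hU.aemeasurable hX.aemeasurable).mp hUX
  have hratio : (fun ω => (U ω * (V ω - 1) / (V ω - U ω)) / U ω)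
      =ᵐ[μ] Function.uncurry moebius ∘ fun ω => (U ω, (V ω)⁻¹) := by
    filter_upwards [ae_of_ae_map hU.aemeasurable (hUlaw ▸ ae_mem_Ioo_betaMeasure _ _),
      ae_of_ae_map hX.aemeasurable (hVlaw ▸ ae_mem_Ioo_betaMeasure _ _)] with ω hu hx
    show _ = moebius (U ω) (V ω)⁻¹
    simpa only [inv_inv] using div_eq_moebius hu.1.ne' hx.1.ne'
  rw [Measure.map_congr hratio, ← Measure.map_map measurable_uncurry_moebius (hU.prodMk hX), hlaw]
  exact map_moebius_prod_betaMeasure hα hβ hlam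

/-- Proposition `pr:hypgeom`, case (a): if `U ~ Beta(α+λ, β)`, `1/V ~ Beta(λ, α)`,
`W ~ Beta(α, β)` are independent and `W' = U·(V−1)/(V−U)`, then `W'/U` has law
absolutely continuous w.r.t. Lebesgue measure, with density
`g(x) = x^(α−1)(1−x)^(λ−1) / (B(λ,α)·B(α+λ,β)) · ∫₀¹ (1−xu)^(−(α+λ)) u^(α+λ−1) (1−u)^(α+β−1) du`
on `(0,1)`, and `0` elsewhere. -/
theorem density_of_doob_transition_a
    {Ω : Type*} [MeasurableSpace Ω] (μ : Measure Ω) [IsProbabilityMeasure μ]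
    (α β lam : ℝ) (hα : 0 < α) (hβ : 0 < β) (hlam : 0 < lam)
    (U V W : Ω → ℝ) (hU : Measurable U) (hV : Measurable V) (hW : Measurable W)
    (hindep : iIndepFun ![U, V, W] μ)
    (hUlaw : μ.map U = _root_.betaMeasure (α + lam) β)
    (hVlaw : μ.map (fun ω => (V ω)⁻¹) = _root_.betaMeasure lam α)
    (hWlaw : μ.map W = _root_.betaMeasure α β) :
    μ.map (fun ω => (U ω * (V ω - 1) / (V ω - U ω)) / U ω)
      = volume.withDensity fun x =>
          ENNReal.ofReal ((Set.Ioo (0 : ℝ) 1).indicator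
            (fun x => x ^ (α - 1) * (1 - x) ^ (lam - 1) / (betaFn lam α * betaFn (α + lam) β) *
              ∫ u in (0 : ℝ)..1,
                (1 - x * u) ^ (-(α + lam)) * u ^ (α + lam - 1) * (1 - u) ^ (α + β - 1)) x) :=
  density_of_doob_transition_a_general μ α β lam hα hβ hlam U V W hU hV hindep hUlaw hVlaw
end

section
/- Fix a > 0. The function g(λ) = ψ₀(a+λ) − ψ₀(λ) is strictly decreasing on (0,∞), satisfies g(λ) → +∞ as λ → 0⁺ and g(λ) → 0 as λ → ∞, and hence is a bijection from (0,∞) onto (0,∞). In particular, for every t > 0 there exists a unique λ > 0 with ψ₀(a+λ) − ψ₀(λ) = t. -/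
/-!
Since `log Γ` is convex, `ψ₀` is increasing on `(0, ∞)`; together with
`ψ₀(x + 1) = ψ₀(x) + 1/x` this squeezes `ψ₀(x + a) - ψ₀(x)` between `0` and `⌈a⌉ / x`.
Telescoping then gives `ψ₀(x + a) - ψ₀(x) = ∑ₖ (1/(x + k) - 1/(x + a + k))`, a series of
positive terms each strictly decreasing in `x`. Hence `g` is strictly decreasing and exceeds
the first term `1/x - 1/(x + a)`, which blows up at `0⁺`, while the bound `⌈a⌉ / x` gives
`g → 0` at `∞`. Being continuous, `g` maps `(0, ∞)` onto `(0, ∞)` by the intermediate value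
theorem.
-/

open Filter

/-- The polygamma function `ψₙ`: the `(n+1)`-st derivative of `log ∘ Γ`. -/
noncomputable def polygamma (n : ℕ) (x : ℝ) : ℝ :=
  iteratedDeriv (n + 1) (fun y => Real.log (Real.Gamma y)) x

open Set Real Topology

theorem StrictAntiOn.bijOn_Ioi_of_tendsto {f : ℝ → ℝ} {b c : ℝ}
    (hanti : StrictAntiOn f (Ioi b)) (hcont : ContinuousOn f (Ioi b))
    (hb : Tendsto f (𝓝[>] b) atTop) (htop : Tendsto f atTop (𝓝 c)) :
    BijOn f (Ioi b) (Ioi c) := by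
  refine ⟨fun x (hx : b < x) => ?_, hanti.injOn, fun t (ht : c < t) => ?_⟩
  · have hlim : c ≤ f (x + 1) := le_of_tendsto htop <| (eventually_ge_atTop (x + 1)).mono
      fun y hy => hanti.antitoneOn (show b < x + 1 by linarith) (show b < y by linarith) hy
    exact hlim.trans_lt (hanti hx (show b < x + 1 by linarith) (by linarith))
  · obtain ⟨x, hxt, hx⟩ := ((hb.eventually_ge_atTop t).and self_mem_nhdsWithin).exists
    obtain ⟨y, hyt, hxy⟩ := ((htop.eventually_lt_const ht).and (eventually_ge_atTop x)).exists
    have hsub : Icc x y ⊆ Ioi b := fun z hz => lt_of_lt_of_le hx hz.1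
    obtain ⟨z, hz, rfl⟩ := intermediate_value_Icc' hxy (hcont.mono hsub) ⟨hyt.le, hxt⟩
    exact ⟨z, hsub hz, rfl⟩

theorem Set.BijOn.existsUnique {α β : Type*} {f : α → β} {s : Set α} {t : Set β}
    (h : BijOn f s t) {y : β} (hy : y ∈ t) : ∃! x, x ∈ s ∧ f x = y := by
  obtain ⟨x, hx, rfl⟩ := h.surjOn hy
  exact ⟨x, ⟨hx, rfl⟩, fun x' ⟨hx', he⟩ => h.injOn hx' hx he⟩

theorem inv_sub_inv_add_strictAntiOn {a : ℝ} (ha : 0 < a) :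
    StrictAntiOn (fun y : ℝ => y⁻¹ - (y + a)⁻¹) (Ioi 0) := by
  have hformula (y : ℝ) (hy : 0 < y) : y⁻¹ - (y + a)⁻¹ = a / (y * (y + a)) := by
    field_simp; ring
  intro y (hy : 0 < y) z (hz : 0 < z) hyz
  simp only [hformula y hy, hformula z hz]
  gcongr

-- `Γ = 1 / (1 / Γ)` and `1 / Γ` is entire.
theorem Complex.analyticAt_Gamma {s : ℂ} (hs : ∀ m : ℕ, s ≠ -m) : AnalyticAt ℂ Gamma s := by
  have h := (differentiable_one_div_Gamma.analyticAt s).inv (inv_ne_zero (Gamma_ne_zero hs))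
  rwa [show (fun s => (Gamma s)⁻¹) = Gamma⁻¹ from rfl, inv_inv] at h

section

variable {x a : ℝ}

theorem Real.contDiffAt_Gamma (hx : ∀ m : ℕ, x ≠ -m) {n : WithTop ℕ∞} :
    ContDiffAt ℝ n Gamma x := by
  have hΓ : AnalyticAt ℂ Complex.Gamma x :=
    Complex.analyticAt_Gamma fun m => by exact_mod_cast hx m
  have hre : ContDiffAt ℝ n (fun y : ℝ => (Complex.Gamma y).re) x :=
    Complex.reCLM.contDiff.contDiffAt.comp x
      (hΓ.restrictScalars.contDiffAt.comp x Complex.ofRealCLM.contDiff.contDiffAt)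
  simpa only [Complex.Gamma_ofReal, Complex.ofReal_re] using hre

theorem contDiffAt_log_Gamma (hx : 0 < x) {n : WithTop ℕ∞} :
    ContDiffAt ℝ n (fun y => log (Gamma y)) x :=
  (contDiffAt_Gamma fun m => by linarith [(m.cast_nonneg : (0 : ℝ) ≤ m)]).log
    (Gamma_pos_of_pos hx).ne'

theorem polygamma_zero_eq_deriv : polygamma 0 = deriv fun y => log (Gamma y) := by
  ext x; simp [polygamma, iteratedDeriv_one]

theorem hasDerivAt_log_Gamma (hx : 0 < x) :
    HasDerivAt (fun y => log (Gamma y)) (polygamma 0 x) x := by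
  rw [polygamma_zero_eq_deriv]
  exact ((contDiffAt_log_Gamma hx (n := 1)).differentiableAt one_ne_zero).hasDerivAt

theorem continuousOn_polygamma_zero : ContinuousOn (polygamma 0) (Ioi 0) := by
  rw [polygamma_zero_eq_deriv]
  have h : ContDiffOn ℝ 1 (fun y => log (Gamma y)) (Ioi 0) :=
    fun x hx => (contDiffAt_log_Gamma hx).contDiffWithinAt
  exact h.continuousOn_deriv_of_isOpen isOpen_Ioi le_rfl

theorem monotoneOn_polygamma_zero : MonotoneOn (polygamma 0) (Ioi 0) := by
  rw [polygamma_zero_eq_deriv]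
  exact convexOn_log_Gamma.monotoneOn_deriv fun x hx =>
    (contDiffAt_log_Gamma hx (n := 1)).differentiableAt one_ne_zero

theorem polygamma_zero_add_one (hx : 0 < x) :
    polygamma 0 (x + 1) = polygamma 0 x + x⁻¹ := by
  have hshift : HasDerivAt (fun y => log (Gamma (y + 1))) (polygamma 0 (x + 1)) x :=
    (hasDerivAt_log_Gamma (by linarith)).comp_add_const x 1
  have hfeq : (fun y => log (Gamma (y + 1))) =ᶠ[𝓝 x] fun y => log y + log (Gamma y) := by
    filter_upwards [lt_mem_nhds hx] with y hy
    rw [Gamma_add_one hy.ne', log_mul hy.ne' (Gamma_pos_of_pos hy).ne']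
  rw [add_comm (polygamma 0 x)]
  exact (hshift.congr_of_eventuallyEq hfeq.symm).unique
    ((hasDerivAt_log hx.ne').add (hasDerivAt_log_Gamma hx))

theorem polygamma_zero_add_nat (hx : 0 < x) (N : ℕ) :
    polygamma 0 (x + N) = polygamma 0 x + ∑ k ∈ Finset.range N, (x + k)⁻¹ := by
  induction N with
  | zero => simp
  | succ n ih =>
    rw [Nat.cast_succ, ← add_assoc, polygamma_zero_add_one (by positivity), ih,
      Finset.sum_range_succ, add_assoc]

theorem polygamma_zero_add_sub_nonneg (hx : 0 < x) (ha : 0 ≤ a) :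
    0 ≤ polygamma 0 (x + a) - polygamma 0 x :=
  sub_nonneg.2 <| monotoneOn_polygamma_zero hx (show 0 < x + a by linarith) (by linarith)

theorem polygamma_zero_add_sub_le (hx : 0 < x) (ha : 0 ≤ a) :
    polygamma 0 (x + a) - polygamma 0 x ≤ ⌈a⌉₊ / x := by
  calc polygamma 0 (x + a) - polygamma 0 x ≤ polygamma 0 (x + ⌈a⌉₊) - polygamma 0 x := by
        gcongr
        exact monotoneOn_polygamma_zero (show 0 < x + a by linarith)
          (show 0 < x + ⌈a⌉₊ by positivity) (by gcongr; exact Nat.le_ceil a)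
    _ = ∑ k ∈ Finset.range ⌈a⌉₊, (x + k)⁻¹ := by rw [polygamma_zero_add_nat hx]; ring
    _ ≤ ∑ _k ∈ Finset.range ⌈a⌉₊, x⁻¹ :=
        Finset.sum_le_sum fun k _ => inv_anti₀ hx (le_add_of_nonneg_right k.cast_nonneg)
    _ = ⌈a⌉₊ / x := by simp [div_eq_mul_inv]

theorem tendsto_polygamma_zero_add_sub_atTop (ha : 0 ≤ a) :
    Tendsto (fun x => polygamma 0 (x + a) - polygamma 0 x) atTop (𝓝 0) :=
  squeeze_zero' ((eventually_gt_atTop 0).mono fun _ hx => polygamma_zero_add_sub_nonneg hx ha)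
    ((eventually_gt_atTop 0).mono fun _ hx => polygamma_zero_add_sub_le hx ha)
    (tendsto_const_nhds.div_atTop tendsto_id)

theorem hasSum_polygamma_zero_add_sub (hx : 0 < x) (ha : 0 ≤ a) :
    HasSum (fun k : ℕ => (x + k)⁻¹ - (x + a + k)⁻¹) (polygamma 0 (x + a) - polygamma 0 x) := by
  rw [hasSum_iff_tendsto_nat_of_nonneg
    fun k => sub_nonneg.2 (inv_anti₀ (by positivity) (by linarith))]
  have hpartial (N : ℕ) : ∑ k ∈ Finset.range N, ((x + k)⁻¹ - (x + a + k)⁻¹) =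
      (polygamma 0 (x + a) - polygamma 0 x) - (polygamma 0 (x + N + a) - polygamma 0 (x + N)) := by
    rw [Finset.sum_sub_distrib, add_right_comm x (N : ℝ) a]
    linarith [polygamma_zero_add_nat hx N, polygamma_zero_add_nat (show 0 < x + a by linarith) N]
  have htail :
      Tendsto (fun N : ℕ => polygamma 0 (x + N + a) - polygamma 0 (x + N)) atTop (𝓝 0) :=
    (tendsto_polygamma_zero_add_sub_atTop ha).comp
      (tendsto_atTop_add_const_left _ x tendsto_natCast_atTop_atTop)
  simpa only [hpartial, sub_zero] using tendsto_const_nhds.sub htail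

theorem inv_sub_inv_add_le_polygamma_zero_add_sub (hx : 0 < x) (ha : 0 ≤ a) :
    x⁻¹ - (x + a)⁻¹ ≤ polygamma 0 (x + a) - polygamma 0 x := by
  simpa using le_hasSum (hasSum_polygamma_zero_add_sub hx ha) 0
    fun k _ => sub_nonneg.2 (inv_anti₀ (by positivity) (by linarith))

theorem strictAntiOn_polygamma_zero_add_sub (ha : 0 < a) :
    StrictAntiOn (fun x => polygamma 0 (x + a) - polygamma 0 x) (Ioi 0) := by
  intro x (hx : 0 < x) y (hy : 0 < y) hxy
  have hterm (k : ℕ) : (y + k)⁻¹ - (y + a + k)⁻¹ < (x + k)⁻¹ - (x + a + k)⁻¹ := by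
    simpa only [add_right_comm _ a] using inv_sub_inv_add_strictAntiOn ha
      (show 0 < x + k by positivity) (show 0 < y + k by positivity) (by linarith)
  exact hasSum_lt (fun k => (hterm k).le) (hterm 0)
    (hasSum_polygamma_zero_add_sub hy ha.le) (hasSum_polygamma_zero_add_sub hx ha.le)

theorem tendsto_polygamma_zero_add_sub_nhdsGT_zero (ha : 0 < a) :
    Tendsto (fun x => polygamma 0 (x + a) - polygamma 0 x) (𝓝[>] 0) atTop := by
  refine tendsto_atTop_mono' _ ?_
    (tendsto_atTop_add_const_right _ (-a⁻¹) tendsto_inv_nhdsGT_zero)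
  filter_upwards [self_mem_nhdsWithin] with x (hx : 0 < x)
  calc x⁻¹ + -a⁻¹ ≤ x⁻¹ - (x + a)⁻¹ := by
        rw [← sub_eq_add_neg]; gcongr; linarith
    _ ≤ _ := inv_sub_inv_add_le_polygamma_zero_add_sub hx ha.le

theorem continuousOn_polygamma_zero_add_sub (ha : 0 ≤ a) :
    ContinuousOn (fun x => polygamma 0 (x + a) - polygamma 0 x) (Ioi 0) :=
  (continuousOn_polygamma_zero.comp (continuousOn_id.add continuousOn_const)
    fun x (hx : 0 < x) => show 0 < x + a by linarith).sub continuousOn_polygamma_zero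

end

/-- Lemma `lam-xi-t`(b): for fixed `a > 0` the function `g(λ) = ψ₀(a+λ) − ψ₀(λ)` is
strictly decreasing on `(0,∞)`, tends to `+∞` at `0⁺` and to `0` at `∞`, and is a
bijection from `(0,∞)` onto `(0,∞)`; in particular for every `t > 0` there is a unique
`λ > 0` with `ψ₀(a+λ) − ψ₀(λ) = t`. -/
theorem lambda_t_duality (a : ℝ) (ha : 0 < a) :
    StrictAntiOn (fun lam => polygamma 0 (a + lam) - polygamma 0 lam) (Set.Ioi 0) ∧
    Tendsto (fun lam => polygamma 0 (a + lam) - polygamma 0 lam)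
      (nhdsWithin 0 (Set.Ioi 0)) atTop ∧
    Tendsto (fun lam => polygamma 0 (a + lam) - polygamma 0 lam) atTop (nhds 0) ∧
    Set.BijOn (fun lam => polygamma 0 (a + lam) - polygamma 0 lam)
      (Set.Ioi 0) (Set.Ioi 0) ∧
    ∀ t : ℝ, 0 < t → ∃! lam : ℝ, 0 < lam ∧ polygamma 0 (a + lam) - polygamma 0 lam = t := by
  simp_rw [add_comm a]
  have hbij := (strictAntiOn_polygamma_zero_add_sub ha).bijOn_Ioi_of_tendsto
    (continuousOn_polygamma_zero_add_sub ha.le) (tendsto_polygamma_zero_add_sub_nhdsGT_zero ha)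
    (tendsto_polygamma_zero_add_sub_atTop ha.le)
  exact ⟨strictAntiOn_polygamma_zero_add_sub ha, tendsto_polygamma_zero_add_sub_nhdsGT_zero ha,
    tendsto_polygamma_zero_add_sub_atTop ha.le, hbij, fun t ht => hbij.existsUnique ht⟩
end

section
/- The function x ↦ exp(ψ₀(x)) is strictly convex on (0,∞). -/
open Real Set Filter Topology Finset

lemma strictConvexOn_of_hasDerivAt2_pos {D : Set ℝ} (hD : Convex ℝ D) (hDo : IsOpen D)
    {f f' f'' : ℝ → ℝ} (hf : ∀ x ∈ D, HasDerivAt f (f' x) x)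
    (hf' : ∀ x ∈ D, HasDerivAt f' (f'' x) x) (hf'' : ∀ x ∈ D, 0 < f'' x) :
    StrictConvexOn ℝ D f := by
  have hmono : StrictMonoOn f' D := strictMonoOn_of_hasDerivWithinAt_pos hD
    (fun x hx => (hf' x hx).continuousAt.continuousWithinAt)
    (fun x hx => (hf' x (interior_subset hx)).hasDerivWithinAt)
    (fun x hx => hf'' x (interior_subset hx))
  refine StrictMonoOn.strictConvexOn_of_deriv hD
    (fun x hx => (hf x hx).continuousAt.continuousWithinAt) ?_
  rw [hDo.interior_eq]
  exact hmono.congr fun x hx => ((hf x hx).deriv).symm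

lemma pos_of_lt_of_tendsto_add_nat {g : ℝ → ℝ} (hg : ∀ y, 0 < y → g (y + 1) < g y)
    (hlim : ∀ y, 0 < y → Tendsto (fun n : ℕ => g (y + n)) atTop (𝓝 0)) {x : ℝ} (hx : 0 < x) :
    0 < g x := by
  have hanti : ∀ y, 0 < y → ∀ n : ℕ, g (y + n) ≤ g y := by
    intro y hy n
    induction n with
    | zero => simp
    | succ n ih =>
      have := hg (y + n) (by positivity)
      push_cast
      rw [← add_assoc]
      linarith
  have hx1 : 0 < x + 1 := by linarith
  have : 0 ≤ g (x + 1) :=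
    le_of_tendsto (hlim (x + 1) hx1) (Eventually.of_forall (hanti (x + 1) hx1))
  linarith [hg x hx]

lemma tendsto_inv_add_nat (x : ℝ) : Tendsto (fun n : ℕ => (x + n)⁻¹) atTop (𝓝 0) :=
  (tendsto_atTop_add_const_left _ x tendsto_natCast_atTop_atTop).inv_tendsto_atTop

noncomputable def hurwitzSeries (k : ℕ) (x : ℝ) : ℝ := ∑' n : ℕ, ((x + n) ^ k)⁻¹

lemma tendsto_hurwitzSeries_add_nat (k : ℕ) (x : ℝ) :
    Tendsto (fun n : ℕ => hurwitzSeries k (x + n)) atTop (𝓝 0) := by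
  refine (tendsto_sum_nat_add fun m : ℕ => ((x + m) ^ k)⁻¹).congr fun n => ?_
  simp only [hurwitzSeries, Nat.cast_add, add_assoc, add_comm (n : ℝ)]

section hurwitzSeries

variable {k : ℕ}

lemma summable_inv_add_nat_pow (x : ℝ) (hk : 2 ≤ k) : Summable fun n : ℕ => ((x + n) ^ k)⁻¹ := by
  refine ((Real.summable_one_div_nat_add_rpow x k).2 (by exact_mod_cast hk)).of_norm_bounded
    fun n => ?_
  simp [add_comm]

lemma hurwitzSeries_eq_inv_pow_add (hk : 2 ≤ k) (x : ℝ) :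
    hurwitzSeries k x = (x ^ k)⁻¹ + hurwitzSeries k (x + 1) := by
  rw [hurwitzSeries, (summable_inv_add_nat_pow x hk).tsum_eq_zero_add, hurwitzSeries]
  simp only [Nat.cast_zero, add_zero, Nat.cast_add, Nat.cast_one, add_assoc, add_comm (1 : ℝ)]

lemma hasDerivAt_hurwitzSeries (hk : 2 ≤ k) {x : ℝ} (hx : 0 < x) :
    HasDerivAt (hurwitzSeries k) (-k * hurwitzSeries (k + 1) x) x := by
  have hx2 : x / 2 < x := half_lt_self hx
  have hpos : ∀ y ∈ Ioi (x / 2), ∀ n : ℕ, 0 < y + n := fun y hy n => by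
    have : 0 < y := lt_trans (by positivity) hy
    positivity
  have hderiv : ∀ (n : ℕ), ∀ y ∈ Ioi (x / 2),
      HasDerivAt (fun z : ℝ => ((z + n) ^ k)⁻¹) (-k * ((y + n) ^ (k + 1))⁻¹) y := by
    intro n y hy
    have h := (hasDerivAt_zpow (-k) (y + n) (Or.inl (hpos y hy n).ne')).comp_add_const y n
    have e : (fun z : ℝ => ((z + n) ^ k)⁻¹) = fun z : ℝ => (z + n) ^ (-(k : ℤ)) := by
      ext z; simp [zpow_neg]
    rw [e]
    refine h.congr_deriv ?_
    rw [show -(k : ℤ) - 1 = -((k + 1 : ℕ) : ℤ) by push_cast; ring, zpow_neg, zpow_natCast]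
    push_cast; ring
  have hbound : ∀ (n : ℕ), ∀ y ∈ Ioi (x / 2),
      ‖-(k : ℝ) * ((y + n) ^ (k + 1))⁻¹‖ ≤ k * ((x / 2 + n) ^ (k + 1))⁻¹ := by
    intro n y hy
    have := hpos y hy n
    rw [norm_mul, norm_neg, Real.norm_natCast, norm_inv, norm_pow, Real.norm_of_nonneg this.le]
    gcongr
    exact hy.le
  have := hasDerivAt_tsum_of_isPreconnected
    ((summable_inv_add_nat_pow (x / 2) (by omega : 2 ≤ k + 1)).mul_left (k : ℝ)) isOpen_Ioi
    isPreconnected_Ioi hderiv hbound hx2 (summable_inv_add_nat_pow x hk) hx2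
  rwa [tsum_mul_left] at this

end hurwitzSeries

lemma inv_add_inv_two_mul_sq_lt_hurwitzSeries_two {x : ℝ} (hx : 0 < x) :
    x⁻¹ + (2 * x ^ 2)⁻¹ < hurwitzSeries 2 x := by
  suffices 0 < hurwitzSeries 2 x - x⁻¹ - (2 * x ^ 2)⁻¹ by linarith
  refine pos_of_lt_of_tendsto_add_nat (g := fun y => hurwitzSeries 2 y - y⁻¹ - (2 * y ^ 2)⁻¹)
    (fun y hy => ?_) (fun y _ => ?_) hx
  · -- the decrement is `(y⁻¹ - (y + 1)⁻¹)² / 2`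
    rw [hurwitzSeries_eq_inv_pow_add le_rfl y]
    have : 0 < (y⁻¹ - (y + 1)⁻¹) ^ 2 := by
      have := inv_strictAnti₀ hy (lt_add_one y)
      positivity
    field_simp at this ⊢
    nlinarith
  · have h := tendsto_inv_add_nat y
    simpa [mul_comm] using
      ((tendsto_hurwitzSeries_add_nat 2 y).sub h).sub ((h.pow 2).const_mul 2⁻¹)

lemma two_mul_hurwitzSeries_three_lt_sq {x : ℝ} (hx : 0 < x) :
    2 * hurwitzSeries 3 x < hurwitzSeries 2 x ^ 2 := by
  suffices 0 < hurwitzSeries 2 x ^ 2 - 2 * hurwitzSeries 3 x by linarith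
  refine pos_of_lt_of_tendsto_add_nat (g := fun y => hurwitzSeries 2 y ^ 2 - 2 * hurwitzSeries 3 y)
    (fun y hy => ?_) (fun y _ => ?_) hx
  · have key := inv_add_inv_two_mul_sq_lt_hurwitzSeries_two hy
    rw [hurwitzSeries_eq_inv_pow_add le_rfl y] at key ⊢
    rw [hurwitzSeries_eq_inv_pow_add (by norm_num) y,
      show (y ^ 3)⁻¹ = (y ^ 2)⁻¹ * y⁻¹ by ring]
    rw [show (2 * y ^ 2)⁻¹ = (y ^ 2)⁻¹ / 2 by ring] at key
    have ha : 0 < (y ^ 2)⁻¹ := by positivity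
    nlinarith [mul_pos ha (sub_pos.2 key)]
  · simpa using ((tendsto_hurwitzSeries_add_nat 2 y).pow 2).sub
      ((tendsto_hurwitzSeries_add_nat 3 y).const_mul 2)

/-- The Weierstrass product for `Γ`, in logarithmic form. -/
noncomputable def logGammaSeries (x : ℝ) : ℝ :=
  -eulerMascheroniConstant * x - log x + ∑' n : ℕ, (x / (n + 1) - log (1 + x / (n + 1)))

noncomputable def digammaSeries (x : ℝ) : ℝ :=
  -eulerMascheroniConstant - x⁻¹ + ∑' n : ℕ, (((n : ℝ) + 1)⁻¹ - (x + 1 + n)⁻¹)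

lemma sub_log_one_add_mem_Icc {t : ℝ} (ht : 0 ≤ t) : t - log (1 + t) ∈ Icc 0 (t ^ 2) := by
  have h1 : 0 < 1 + t := by linarith
  have upper : log (1 + t) ≤ t := by linarith [log_le_sub_one_of_pos h1]
  have lower : 1 - (1 + t)⁻¹ ≤ log (1 + t) := one_sub_inv_le_log_of_pos h1
  have : t - (1 - (1 + t)⁻¹) ≤ t ^ 2 := by
    field_simp
    nlinarith
  exact ⟨by linarith, by linarith⟩

lemma summable_logGammaSeries_term {x : ℝ} (hx : 0 ≤ x) :
    Summable fun n : ℕ => x / (n + 1) - log (1 + x / (n + 1)) := by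
  refine Summable.of_nonneg_of_le (fun n => (sub_log_one_add_mem_Icc (by positivity)).1)
    (fun n => ?_) ((summable_inv_add_nat_pow 1 le_rfl).mul_left (x ^ 2))
  refine (sub_log_one_add_mem_Icc (by positivity)).2.trans_eq ?_
  rw [div_pow, div_eq_mul_inv, add_comm (1 : ℝ)]

lemma sum_range_logGammaSeries_term {x : ℝ} (hx : 0 < x) (N : ℕ) :
    ∑ n ∈ range N, (x / (n + 1) - log (1 + x / (n + 1))) =
      BohrMollerup.logGammaSeq x N + x * (harmonic N - log N) + log x := by
  induction N with
  | zero => simp [BohrMollerup.logGammaSeq]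
  | succ N ih =>
    have hN : (0 : ℝ) < N + 1 := by positivity
    have hlog : log (1 + x / (N + 1)) = log (x + (N + 1)) - log (N + 1) := by
      rw [← log_div (by positivity) hN.ne']
      congr 1
      field_simp
      ring
    rw [sum_range_succ, ih, hlog]
    simp only [BohrMollerup.logGammaSeq, sum_range_succ _ (N + 1), harmonic_succ,
      Nat.factorial_succ]
    push_cast
    rw [log_mul hN.ne' (by positivity)]
    ring

lemma logGammaSeries_eq_log_Gamma {x : ℝ} (hx : 0 < x) : logGammaSeries x = log (Gamma x) := by
  have hsum := (summable_logGammaSeries_term hx.le).hasSum.tendsto_sum_nat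
  simp only [sum_range_logGammaSeries_term hx] at hsum
  have hlim := ((BohrMollerup.tendsto_log_gamma hx).add
    (tendsto_harmonic_sub_log.const_mul x)).add_const (log x)
  rw [logGammaSeries, tendsto_nhds_unique hsum hlim]
  ring

lemma abs_inv_sub_inv_add_le {y : ℝ} (hy : 0 ≤ y) (n : ℕ) :
    |((n : ℝ) + 1)⁻¹ - (y + 1 + n)⁻¹| ≤ y * ((1 + (n : ℝ)) ^ 2)⁻¹ := by
  have hn : (0 : ℝ) < n + 1 := by positivity
  have e : ((n : ℝ) + 1)⁻¹ - (y + 1 + n)⁻¹ = y / ((n + 1) * (y + 1 + n)) := by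
    field_simp
    ring
  rw [e, abs_of_nonneg (by positivity), div_eq_mul_inv]
  gcongr
  nlinarith

lemma summable_digammaSeries_term {x : ℝ} (hx : 0 ≤ x) :
    Summable fun n : ℕ => ((n : ℝ) + 1)⁻¹ - (x + 1 + n)⁻¹ :=
  ((summable_inv_add_nat_pow 1 le_rfl).mul_left x).of_norm_bounded (abs_inv_sub_inv_add_le hx)

lemma hasDerivAt_logGammaSeries {x : ℝ} (hx : 0 < x) :
    HasDerivAt logGammaSeries (digammaSeries x) x := by
  have hmem : x ∈ Ioo 0 (x + 1) := ⟨hx, lt_add_one x⟩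
  have hderiv : ∀ (n : ℕ), ∀ y ∈ Ioo 0 (x + 1), HasDerivAt
      (fun z : ℝ => z / (n + 1) - log (1 + z / (n + 1))) (((n : ℝ) + 1)⁻¹ - (y + 1 + n)⁻¹) y := by
    intro n y hy
    have hy0 : 0 < y := hy.1
    have h1 : 0 < 1 + y / (n + 1) := by positivity
    refine (((hasDerivAt_id' y).div_const ((n : ℝ) + 1)).fun_sub
      ((((hasDerivAt_id' y).div_const ((n : ℝ) + 1)).const_add 1).log h1.ne')).congr_deriv ?_
    field_simp
    ring
  have hbound : ∀ (n : ℕ), ∀ y ∈ Ioo 0 (x + 1),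
      ‖((n : ℝ) + 1)⁻¹ - (y + 1 + n)⁻¹‖ ≤ (x + 1) * ((1 + (n : ℝ)) ^ 2)⁻¹ := fun n y hy =>
    (abs_inv_sub_inv_add_le hy.1.le n).trans (by gcongr; exact hy.2.le)
  have hseries := hasDerivAt_tsum_of_isPreconnected
    ((summable_inv_add_nat_pow 1 le_rfl).mul_left (x + 1)) isOpen_Ioo isPreconnected_Ioo
    hderiv hbound hmem (summable_logGammaSeries_term hx.le) hmem
  have hmain : HasDerivAt (fun y => -eulerMascheroniConstant * y - log y)
      (-eulerMascheroniConstant - x⁻¹) x := by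
    simpa using ((hasDerivAt_id' x).const_mul (-eulerMascheroniConstant)).fun_sub
      (hasDerivAt_log hx.ne')
  exact hmain.add hseries

lemma hasDerivAt_digammaSeries {x : ℝ} (hx : 0 < x) :
    HasDerivAt digammaSeries (hurwitzSeries 2 x) x := by
  have hx2 : 0 < x / 2 := half_pos hx
  have hx' : x ∈ Ioi (x / 2) := half_lt_self hx
  have hderiv : ∀ (n : ℕ), ∀ y ∈ Ioi (x / 2), HasDerivAt
      (fun z : ℝ => ((n : ℝ) + 1)⁻¹ - (z + 1 + n)⁻¹) (((y + 1 + n) ^ 2)⁻¹) y := by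
    intro n y hy
    have : 0 < y + 1 + n := by have : 0 < y := hx2.trans hy; positivity
    exact ((((hasDerivAt_id' y).add_const 1).add_const (n : ℝ)).inv this.ne').const_sub
      ((n : ℝ) + 1)⁻¹ |>.congr_deriv (by ring)
  have hbound : ∀ (n : ℕ), ∀ y ∈ Ioi (x / 2),
      ‖((y + 1 + n) ^ 2)⁻¹‖ ≤ ((x / 2 + 1 + n) ^ 2)⁻¹ := by
    intro n y hy
    rw [Real.norm_of_nonneg (by positivity)]
    gcongr
    exact hy.le
  have hseries := hasDerivAt_tsum_of_isPreconnected
    (summable_inv_add_nat_pow (x / 2 + 1) le_rfl) isOpen_Ioi isPreconnected_Ioi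
    hderiv hbound hx' (summable_digammaSeries_term hx.le) hx'
  have hmain : HasDerivAt (fun y => -eulerMascheroniConstant - y⁻¹) (x ^ 2)⁻¹ x := by
    simpa using (hasDerivAt_inv hx.ne').const_sub (-eulerMascheroniConstant)
  rw [hurwitzSeries_eq_inv_pow_add le_rfl]
  exact hmain.add hseries

lemma polygamma_zero_eq_digammaSeries {x : ℝ} (hx : 0 < x) : polygamma 0 x = digammaSeries x := by
  have hlog : (fun y => log (Gamma y)) =ᶠ[𝓝 x] logGammaSeries :=
    eventually_of_mem (Ioi_mem_nhds hx) fun y hy => (logGammaSeries_eq_log_Gamma hy).symm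
  rw [polygamma, zero_add, iteratedDeriv_one, hlog.deriv_eq, (hasDerivAt_logGammaSeries hx).deriv]

/-- The function `x ↦ exp(ψ₀(x))` is strictly convex on `(0,∞)`. -/
theorem strictConvexOn_exp_digamma :
    StrictConvexOn ℝ (Set.Ioi 0) (fun x => Real.exp (polygamma 0 x)) := by
  have hψ : EqOn (fun x => exp (digammaSeries x)) (fun x => exp (polygamma 0 x)) (Ioi 0) :=
    fun x hx => by simp only [polygamma_zero_eq_digammaSeries hx]
  refine (strictConvexOn_of_hasDerivAt2_pos (convex_Ioi 0) isOpen_Ioi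
    (f' := fun x => exp (digammaSeries x) * hurwitzSeries 2 x)
    (f'' := fun x => exp (digammaSeries x) * (hurwitzSeries 2 x ^ 2 - 2 * hurwitzSeries 3 x))
    (fun x hx => (hasDerivAt_digammaSeries hx).exp) (fun x hx => ?_) (fun x hx => ?_)).congr hψ
  · exact ((hasDerivAt_digammaSeries hx).exp.mul (hasDerivAt_hurwitzSeries le_rfl hx)).congr_deriv
      (by push_cast; ring)
  · exact mul_pos (exp_pos _) (sub_pos.2 (two_mul_hurwitzSeries_three_lt_sq hx))
end

section
/- Let p : ℤ² → (0,1) be an arbitrary function, and for x ≤ z coordinatewise in ℤ² define F(x,z) = Σ over all up-right nearest-neighbor paths x = y₀, y₁, …, y_n = z (with steps y_{i+1} − y_i ∈ {e₁, e₂}, where e₁ = (1,0), e₂ = (0,1), and n = |z−x|₁) of ∏_{i<n} w(y_i, y_{i+1}), where w(y, y+e₁) = p(y) and w(y, y+e₂) = 1 − p(y); set F(x,z) = 0 when x ≤ z fails. Then for every a ∈ ℤ² and every y ∈ ℤ² with y ≥ a coordinatewise: F(a+e₁, y+e₂)·F(a, y) ≤ F(a+e₁, y)·F(a, y+e₂)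 and F(a+e₁, y)·F(a, y+e₁) ≤ F(a+e₁, y+e₁)·F(a, y); moreover the same two inequalities hold with the roles of e₁ and e₂ interchanged (i.e., F(a+e₂, y+e₁)·F(a, y) ≤ F(a+e₂, y)·F(a, y+e₁) and F(a+e₂, y)·F(a, y+e₂) ≤ F(a+e₂, y+e₂)·F(a, y)). -/
open Finset

/-- The position just before step `i` of the up-right path started at `x` whose step
sequence is `s` (`s j = true` means step `e₁ = (1,0)`, `s j = false` means step
`e₂ = (0,1)`). -/
def stepPos (x : ℤ × ℤ) {n : ℕ} (s : Fin n → Bool) (i : Fin n) : ℤ × ℤ :=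
  (x.1 + ((Finset.univ.filter fun j : Fin n => j < i ∧ s j = true).card : ℤ),
   x.2 + ((Finset.univ.filter fun j : Fin n => j < i ∧ s j = false).card : ℤ))

/-- The endpoint of the up-right path started at `x` with step sequence `s`. -/
def endPos (x : ℤ × ℤ) {n : ℕ} (s : Fin n → Bool) : ℤ × ℤ :=
  (x.1 + ((Finset.univ.filter fun j : Fin n => s j = true).card : ℤ),
   x.2 + ((Finset.univ.filter fun j : Fin n => s j = false).card : ℤ))

/-- The weight `∏ᵢ w(yᵢ, yᵢ₊₁)` of the up-right path started at `x` with step sequence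
`s`, where `w(y, y+e₁) = p(y)` and `w(y, y+e₂) = 1 − p(y)`. -/
def pathWeight (p : ℤ × ℤ → ℝ) (x : ℤ × ℤ) {n : ℕ} (s : Fin n → Bool) : ℝ :=
  ∏ i : Fin n, if s i then p (stepPos x s i) else 1 - p (stepPos x s i)

/-- `walkF p x z`: the sum over all up-right nearest-neighbor paths from `x` to `z` of
their weights; i.e. the probability that the directed walk with transition kernel
`(p, 1−p)` started at `x` passes through `z`.  (Up-right paths from `x` of length
`|z−x|₁` correspond bijectively to their step sequences `s : Fin |z−x|₁ → Bool`.) -/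
def walkF (p : ℤ × ℤ → ℝ) (x z : ℤ × ℤ) : ℝ :=
  ∑ s ∈ (Finset.univ : Finset (Fin (z.1 + z.2 - x.1 - x.2).toNat → Bool)).filter
      (fun s => endPos x s = z),
    pathWeight p x s

-- card lemmas
lemma filter_cons_card {n : ℕ} (b c : Bool) (s' : Fin n → Bool) :
    (Finset.univ.filter fun j : Fin (n+1) => Fin.cons (α := fun _ => Bool) b s' j = c).card
      = (if b = c then 1 else 0) + (Finset.univ.filter fun j : Fin n => s' j = c).card := by
  rw [Finset.card_filter, Finset.card_filter, Fin.sum_univ_succ]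
  simp [Fin.cons_succ, Fin.cons_zero]

lemma filter_cons_card_lt {n : ℕ} (b c : Bool) (s' : Fin n → Bool) (i : Fin n) :
    (Finset.univ.filter fun j : Fin (n+1) => j < i.succ ∧ Fin.cons (α := fun _ => Bool) b s' j = c).card
      = (if b = c then 1 else 0) + (Finset.univ.filter fun j : Fin n => j < i ∧ s' j = c).card := by
  rw [Finset.card_filter, Finset.card_filter, Fin.sum_univ_succ]
  simp [Fin.cons_succ, Fin.cons_zero, Fin.succ_lt_succ_iff, Fin.succ_pos]

lemma stepPos_zero (x : ℤ × ℤ) {n : ℕ} (s : Fin (n+1) → Bool) : stepPos x s 0 = x := by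
  simp [stepPos, Fin.not_lt_zero]

lemma stepPos_cons (x : ℤ × ℤ) {n : ℕ} (b : Bool) (s' : Fin n → Bool) (i : Fin n) :
    stepPos x (Fin.cons b s') i.succ
      = stepPos (x + if b then ((1 : ℤ), (0 : ℤ)) else (0, 1)) s' i := by
  unfold stepPos
  rw [filter_cons_card_lt, filter_cons_card_lt]
  cases b <;> simp [Prod.ext_iff] <;> omega

lemma endPos_cons (x : ℤ × ℤ) {n : ℕ} (b : Bool) (s' : Fin n → Bool) :
    endPos x (Fin.cons b s')
      = endPos (x + if b then ((1 : ℤ), (0 : ℤ)) else (0, 1)) s' := by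
  unfold endPos
  rw [filter_cons_card, filter_cons_card]
  cases b <;> simp [Prod.ext_iff] <;> omega

lemma pathWeight_cons (p : ℤ × ℤ → ℝ) (x : ℤ × ℤ) {n : ℕ} (b : Bool) (s' : Fin n → Bool) :
    pathWeight p x (Fin.cons b s')
      = (if b then p x else 1 - p x)
        * pathWeight p (x + if b then ((1 : ℤ), (0 : ℤ)) else (0, 1)) s' := by
  unfold pathWeight
  rw [Fin.prod_univ_succ]
  congr 1
  · rw [Fin.cons_zero, stepPos_zero]
  · exact Finset.prod_congr rfl fun i _ => by rw [Fin.cons_succ, stepPos_cons]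

lemma walkF_zero (p : ℤ × ℤ → ℝ) {x z : ℤ × ℤ} (h : ¬ x ≤ z) : walkF p x z = 0 := by
  unfold walkF
  rw [Finset.filter_false_of_mem, Finset.sum_empty]
  intro s _ hs
  apply h
  rw [← hs]
  exact ⟨le_add_of_nonneg_right (Int.ofNat_nonneg _), le_add_of_nonneg_right (Int.ofNat_nonneg _)⟩

lemma walkF_nonneg (p : ℤ × ℤ → ℝ) (hp : ∀ y, p y ∈ Set.Ioo (0:ℝ) 1) (x z : ℤ × ℤ) :
    0 ≤ walkF p x z := by
  apply Finset.sum_nonneg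
  intro s _
  apply Finset.prod_nonneg
  intro i _
  by_cases h : s i = true <;> simp [h]
  · exact (hp _).1.le
  · exact (hp _).2.le

lemma walkF_step_aux (p : ℤ × ℤ → ℝ) (n : ℕ) (x z : ℤ × ℤ)
    (h : z.1 + z.2 - x.1 - x.2 = (n : ℤ) + 1) :
    walkF p x z = p x * walkF p (x + (1, 0)) z + (1 - p x) * walkF p (x + (0, 1)) z := by
  have e0 : (z.1 + z.2 - x.1 - x.2).toNat = n + 1 := by omega
  have e1 : (z.1 + z.2 - (x + ((1:ℤ), (0:ℤ))).1 - (x + (1, 0)).2).toNat = n := by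
    simp only [Prod.fst_add, Prod.snd_add]; omega
  have e2 : (z.1 + z.2 - (x + ((0:ℤ), (1:ℤ))).1 - (x + (0, 1)).2).toNat = n := by
    simp only [Prod.fst_add, Prod.snd_add]; omega
  unfold walkF
  rw [e0, e1, e2]
  rw [Finset.sum_filter, Finset.sum_filter, Finset.sum_filter]
  rw [← Equiv.sum_comp (Fin.consEquiv (fun _ : Fin (n+1) => Bool))]
  rw [Fintype.sum_prod_type, Fintype.sum_bool]
  have key : ∀ (b : Bool) (s' : Fin n → Bool),
      (if endPos x (Fin.cons b s') = z then pathWeight p x (Fin.cons b s') else 0)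
        = (if b then p x else 1 - p x) *
          (if endPos (x + if b then ((1:ℤ),(0:ℤ)) else (0,1)) s' = z
            then pathWeight p (x + if b then ((1:ℤ),(0:ℤ)) else (0,1)) s' else 0) := by
    intro b s'
    rw [endPos_cons, pathWeight_cons]
    rw [mul_ite, mul_zero]
  have hce : ∀ (b : Bool) (y : Fin n → Bool),
      (Fin.consEquiv fun _ : Fin (n+1) => Bool) (b, y) = Fin.cons b y := fun _ _ => rfl
  simp only [hce, key]
  rw [← Finset.mul_sum, ← Finset.mul_sum]
  norm_num

lemma walkF_step (p : ℤ × ℤ → ℝ) (x z : ℤ × ℤ) (hxz : x ≠ z) :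
    walkF p x z = p x * walkF p (x + (1, 0)) z + (1 - p x) * walkF p (x + (0, 1)) z := by
  by_cases hle : x ≤ z
  · obtain ⟨h1, h2⟩ := hle
    have hne : z.1 + z.2 - x.1 - x.2 ≥ 1 := by
      rcases eq_or_lt_of_le h1 with h | h
      · have : x.2 ≠ z.2 := fun hh => hxz (Prod.ext h hh)
        omega
      · omega
    exact walkF_step_aux p (z.1 + z.2 - x.1 - x.2 - 1).toNat x z (by omega)
  · have k1 : x ≤ x + ((1:ℤ), (0:ℤ)) := le_add_of_nonneg_right (by constructor <;> norm_num)
    have k2 : x ≤ x + ((0:ℤ), (1:ℤ)) := le_add_of_nonneg_right (by constructor <;> norm_num)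
    rw [walkF_zero p hle, walkF_zero p (fun h => hle (k1.trans h)),
      walkF_zero p (fun h => hle (k2.trans h))]
    ring

lemma walkF_master (p : ℤ × ℤ → ℝ) (hp : ∀ y, p y ∈ Set.Ioo (0:ℝ) 1) (n : ℕ) :
    ∀ x x' z z' : ℤ × ℤ, x.1 ≤ x'.1 → x'.2 ≤ x.2 → z.1 ≤ z'.1 → z'.2 ≤ z.2 →
    z.1 + z.2 + z'.1 + z'.2 - x.1 - x.2 - x'.1 - x'.2 ≤ (n : ℤ) →
    walkF p x z' * walkF p x' z ≤ walkF p x z * walkF p x' z' := by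
  induction n using Nat.strong_induction_on with
  | _ n ih =>
  intro x x' z z' h1 h2 h3 h4 hN
  by_cases hxz' : x ≤ z'
  swap
  · rw [walkF_zero p hxz', zero_mul]
    exact mul_nonneg (walkF_nonneg p hp _ _) (walkF_nonneg p hp _ _)
  by_cases hx'z : x' ≤ z
  swap
  · rw [walkF_zero p hx'z, mul_zero]
    exact mul_nonneg (walkF_nonneg p hp _ _) (walkF_nonneg p hp _ _)
  have hxz : x ≤ z := ⟨le_trans h1 hx'z.1, le_trans hxz'.2 h4⟩
  have hx'z' : x' ≤ z' := ⟨le_trans hx'z.1 h3, le_trans h2 hxz'.2⟩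
  by_cases hxx' : x = x'
  · subst hxx'; rw [mul_comm]
  have hp0 : 0 ≤ p x := (hp x).1.le
  have hq0 : 0 ≤ 1 - p x := by have := (hp x).2.le; linarith
  have hp0' : 0 ≤ p x' := (hp x').1.le
  have hq0' : 0 ≤ 1 - p x' := by have := (hp x').2.le; linarith
  rcases lt_or_eq_of_le h1 with hlt | heq
  · -- x.1 < x'.1 : expand at x
    have hxz_ne : x ≠ z := by
      intro he; rw [he] at hlt; exact absurd hx'z.1 (not_le.2 hlt)
    have hxz'_ne : x ≠ z' := by
      intro he
      have : z.1 ≤ x.1 := he ▸ h3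
      exact absurd (le_trans hx'z.1 this) (not_le.2 hlt)
    have hn1 : 1 ≤ z.1 + z.2 - x.1 - x.2 := by
      have c1 := hxz.1; have c2 := hxz.2
      have : x.1 ≠ z.1 ∨ x.2 ≠ z.2 := by
        by_contra hc; push_neg at hc; exact hxz_ne (Prod.ext hc.1 hc.2)
      omega
    have hn0 : 0 ≤ z'.1 + z'.2 - x'.1 - x'.2 := by
      have := hx'z'.1; have := hx'z'.2; omega
    have hn : 1 ≤ n := by omega
    have I1 : walkF p (x + (1,0)) z' * walkF p x' z
        ≤ walkF p (x + (1,0)) z * walkF p x' z' := by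
      apply ih (n-1) (by omega)
      · simpa using hlt
      · simpa using h2
      · exact h3
      · exact h4
      · simp only [Prod.fst_add, Prod.snd_add]; push_cast; omega
    have I2 : walkF p (x + (0,1)) z' * walkF p x' z
        ≤ walkF p (x + (0,1)) z * walkF p x' z' := by
      apply ih (n-1) (by omega)
      · simpa using h1
      · simp only [Prod.snd_add]; omega
      · exact h3
      · exact h4
      · simp only [Prod.fst_add, Prod.snd_add]; push_cast; omega
    rw [walkF_step p x z hxz_ne, walkF_step p x z' hxz'_ne]
    calc (p x * walkF p (x+(1,0)) z' + (1 - p x) * walkF p (x+(0,1)) z') * walkF p x' z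
        = p x * (walkF p (x+(1,0)) z' * walkF p x' z)
          + (1 - p x) * (walkF p (x+(0,1)) z' * walkF p x' z) := by ring
      _ ≤ p x * (walkF p (x+(1,0)) z * walkF p x' z')
          + (1 - p x) * (walkF p (x+(0,1)) z * walkF p x' z') :=
        add_le_add (mul_le_mul_of_nonneg_left I1 hp0) (mul_le_mul_of_nonneg_left I2 hq0)
      _ = (p x * walkF p (x+(1,0)) z + (1 - p x) * walkF p (x+(0,1)) z) * walkF p x' z' := by
        ring
  · -- x.1 = x'.1, hence x'.2 < x.2 : expand at x'
    have hlt2 : x'.2 < x.2 := by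
      rcases lt_or_eq_of_le h2 with h | h
      · exact h
      · exact absurd (Prod.ext heq h.symm) hxx'
    have hx'z_ne : x' ≠ z := by
      intro he; rw [← he] at hxz; exact absurd hxz.2 (not_le.2 hlt2)
    have hx'z'_ne : x' ≠ z' := by
      intro he; rw [← he] at hxz'; exact absurd hxz'.2 (not_le.2 hlt2)
    have hn1 : 1 ≤ z'.1 + z'.2 - x'.1 - x'.2 := by
      have c1 := hx'z'.1; have c2 := hx'z'.2
      have : x'.1 ≠ z'.1 ∨ x'.2 ≠ z'.2 := by
        by_contra hc; push_neg at hc; exact hx'z'_ne (Prod.ext hc.1 hc.2)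
      omega
    have hn0 : 0 ≤ z.1 + z.2 - x.1 - x.2 := by
      have := hxz.1; have := hxz.2; omega
    have hn : 1 ≤ n := by omega
    have I1 : walkF p x z' * walkF p (x' + (1,0)) z
        ≤ walkF p x z * walkF p (x' + (1,0)) z' := by
      apply ih (n-1) (by omega)
      · simp only [Prod.fst_add]; omega
      · simpa using h2
      · exact h3
      · exact h4
      · simp only [Prod.fst_add, Prod.snd_add]; push_cast; omega
    have I2 : walkF p x z' * walkF p (x' + (0,1)) z
        ≤ walkF p x z * walkF p (x' + (0,1)) z' := by
      apply ih (n-1) (by omega)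
      · simpa using h1
      · simp only [Prod.snd_add]; omega
      · exact h3
      · exact h4
      · simp only [Prod.fst_add, Prod.snd_add]; push_cast; omega
    rw [walkF_step p x' z hx'z_ne, walkF_step p x' z' hx'z'_ne]
    calc walkF p x z' * (p x' * walkF p (x'+(1,0)) z + (1 - p x') * walkF p (x'+(0,1)) z)
        = p x' * (walkF p x z' * walkF p (x'+(1,0)) z)
          + (1 - p x') * (walkF p x z' * walkF p (x'+(0,1)) z) := by ring
      _ ≤ p x' * (walkF p x z * walkF p (x'+(1,0)) z')
          + (1 - p x') * (walkF p x z * walkF p (x'+(0,1)) z') :=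
        add_le_add (mul_le_mul_of_nonneg_left I1 hp0') (mul_le_mul_of_nonneg_left I2 hq0')
      _ = walkF p x z * (p x' * walkF p (x'+(1,0)) z' + (1 - p x') * walkF p (x'+(0,1)) z') := by
        ring

/-- Lemma `lm:order`: log-supermodularity of the passage probabilities `F`,
in cross-multiplied form, together with the same inequalities with `e₁` and `e₂`
interchanged. -/
theorem passage_probability_ratio_monotonicity
    (p : ℤ × ℤ → ℝ) (hp : ∀ y, p y ∈ Set.Ioo (0 : ℝ) 1)
    (a y : ℤ × ℤ) (hay : a ≤ y) :
    (walkF p (a + (1, 0)) (y + (0, 1)) * walkF p a y ≤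
        walkF p (a + (1, 0)) y * walkF p a (y + (0, 1))) ∧
    (walkF p (a + (1, 0)) y * walkF p a (y + (1, 0)) ≤
        walkF p (a + (1, 0)) (y + (1, 0)) * walkF p a y) ∧
    (walkF p (a + (0, 1)) (y + (1, 0)) * walkF p a y ≤
        walkF p (a + (0, 1)) y * walkF p a (y + (1, 0))) ∧
    (walkF p (a + (0, 1)) y * walkF p a (y + (0, 1)) ≤
        walkF p (a + (0, 1)) (y + (0, 1)) * walkF p a y) := by
  have M := walkF_master p hp
  refine ⟨?_, ?_, ?_, ?_⟩
  · -- x = a, x' = a+e1, z = y+e2, z' = y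
    have h := M (y.1 + y.2 + 1 + y.1 + y.2 - a.1 - a.2 - a.1 - 1 - a.2).toNat
      a (a + (1,0)) (y + (0,1)) y
      (by simp) (by simp) (by simp) (by simp)
      (by simp only [Prod.fst_add, Prod.snd_add]; push_cast; omega)
    linarith [h]
  · have h := M (y.1 + y.2 + y.1 + 1 + y.2 - a.1 - a.2 - a.1 - 1 - a.2).toNat
      a (a + (1,0)) y (y + (1,0))
      (by simp) (by simp) (by simp) (by simp)
      (by simp only [Prod.fst_add, Prod.snd_add]; push_cast; omega)
    linarith [h]
  · have h := M (y.1 + 1 + y.2 + y.1 + y.2 - a.1 - a.2 - a.1 - a.2 - 1).toNat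
      (a + (0,1)) a y (y + (1,0))
      (by simp) (by simp) (by simp) (by simp)
      (by simp only [Prod.fst_add, Prod.snd_add]; push_cast; omega)
    linarith [h]
  · have h := M (y.1 + y.2 + 1 + y.1 + y.2 - a.1 - a.2 - a.1 - a.2 - 1).toNat
      (a + (0,1)) a (y + (0,1)) y
      (by simp) (by simp) (by simp) (by simp)
      (by simp only [Prod.fst_add, Prod.snd_add]; push_cast; omega)
    linarith [h]
end
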